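/- arXiv:2211.13549 — 4 statements merged into one kernel-verified Lean document; each statement's English description precedes it below -/
import Mathlib

section
/- Let A be a bounded self-adjoint positive operator on a real separable Hilbert space with ‖A‖ ≤ C* for some C* > 0, let λ > 0, and let γ_t, …, γ_k be positive reals with γ_j (C* + λ) ≤ 1 for all j ∈ [t, k]. Then for every α > 0, ‖A^α ∏_{j=t}^{k} (I − γ_j (A + λ I))‖² ≤ ((α/e)^{2α} + C*^{2α}) / ( exp(λ ∑_{j=t}^{k} γ_j) · (1 + (∑_{j=t}^{k} γ_j)^{2α}) ). -/
/-!
Through the continuous functional calculus the operator is `f(A)` with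
`f(x) = x^α ∏ⱼ (1 - γⱼ (x + λ))`, so its norm is at most `sup |f|` over `spec A ⊆ [0, C*]`.
There `0 ≤ 1 - γⱼ (x + λ) ≤ exp (-γⱼ (x + λ))`, hence, with `S = ∑ⱼ γⱼ` and
`q = x^α exp (-x S)`, `f(x)² ≤ exp (-2λS) q² ≤ exp (-λS) q²`. Finally
`q² (1 + S^(2α)) = q² + (q S^α)²`, where `q ≤ C*^α` and
`q S^α = (x S)^α exp (-x S) ≤ (α / e)^α`, the maximum of `u ↦ u^α exp (-u)`.
-/

open Real

lemma rpow_mul_exp_neg_le {β u : ℝ} (hβ : 0 < β) (hu : 0 ≤ u) :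
    u ^ β * exp (-u) ≤ (β / exp 1) ^ β := by
  have h : u / β ≤ exp (u / β - 1) := by linarith [add_one_le_exp (u / β - 1)]
  have h' := rpow_le_rpow (by positivity) h hβ.le
  rw [div_rpow hu hβ.le, ← exp_mul, sub_mul, div_mul_cancel₀ _ hβ.ne', one_mul, exp_sub,
    div_le_div_iff₀ (by positivity) (exp_pos β)] at h'
  rw [div_rpow hβ.le (exp_pos 1).le, exp_one_rpow, exp_neg, ← div_eq_mul_inv,
    div_le_div_iff₀ (exp_pos u) (exp_pos β)]
  linarith

lemma sq_rpow_mul_exp_neg_mul_le {α C x S : ℝ} (hα : 0 < α) (hx : x ∈ Set.Icc 0 C) (hS : 0 ≤ S) :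
    (x ^ α * exp (-(x * S))) ^ 2 * (1 + S ^ (2 * α)) ≤ (α / exp 1) ^ (2 * α) + C ^ (2 * α) := by
  obtain ⟨hx0, hxC⟩ := hx
  have hsq : ∀ {y : ℝ}, 0 ≤ y → y ^ (2 * α) = (y ^ α) ^ 2 := fun hy => by
    rw [mul_comm, ← rpow_mul_natCast hy]; norm_num
  set q := x ^ α * exp (-(x * S))
  have hq0 : 0 ≤ q := by positivity
  have hqC : q ≤ C ^ α := calc
    q ≤ x ^ α := mul_le_of_le_one_right (by positivity) (exp_le_one_iff.mpr (by nlinarith))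
    _ ≤ C ^ α := rpow_le_rpow hx0 hxC hα.le
  have hqS : q * S ^ α ≤ (α / exp 1) ^ α := by
    have := rpow_mul_exp_neg_le hα (mul_nonneg hx0 hS)
    rwa [mul_rpow hx0 hS, mul_right_comm] at this
  rw [hsq hS, hsq (by positivity), hsq (hx0.trans hxC)]
  nlinarith [mul_nonneg hq0 (rpow_nonneg hS α)]

lemma sq_rpow_mul_le_of_le_exp_neg {α C lam S x p : ℝ} (hα : 0 < α) (hlam : 0 ≤ lam) (hS : 0 ≤ S)
    (hx : x ∈ Set.Icc 0 C) (hp0 : 0 ≤ p) (hp : p ≤ exp (-((x + lam) * S))) :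
    (x ^ α * p) ^ 2 ≤
      ((α / exp 1) ^ (2 * α) + C ^ (2 * α)) / (exp (lam * S) * (1 + S ^ (2 * α))) := by
  set E := exp (lam * S)
  have hE : 1 ≤ E := one_le_exp (mul_nonneg hlam hS)
  have hpE : p * E ≤ exp (-(x * S)) := calc
    p * E ≤ exp (-((x + lam) * S)) * E := by gcongr
    _ = exp (-(x * S)) := by rw [← exp_add]; ring_nf
  rw [le_div_iff₀ (by positivity), ← mul_assoc]
  refine le_trans ?_ (sq_rpow_mul_exp_neg_mul_le hα hx hS)
  gcongr
  calc (x ^ α * p) ^ 2 * E ≤ (x ^ α * p) ^ 2 * E ^ 2 := by gcongr; exact le_self_pow₀ hE two_ne_zero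
    _ = (x ^ α * (p * E)) ^ 2 := by ring
    _ ≤ (x ^ α * exp (-(x * S))) ^ 2 := by have := rpow_nonneg hx.1 α; gcongr

lemma Finset.prod_one_sub_le_exp_neg_sum {ι : Type*} (s : Finset ι) {u : ι → ℝ}
    (hu : ∀ i ∈ s, u i ≤ 1) : ∏ i ∈ s, (1 - u i) ≤ exp (-∑ i ∈ s, u i) := by
  rw [← Finset.sum_neg_distrib, exp_sum]
  exact Finset.prod_le_prod (fun i hi => sub_nonneg.mpr (hu i hi)) fun i _ => one_sub_le_exp_neg _

lemma List.prod_map_range'_eq_prod_Icc {M : Type*} [CommMonoid M] (f : ℕ → M) (t k : ℕ) :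
    ((List.range' t (k + 1 - t)).map f).prod = ∏ j ∈ Finset.Icc t k, f j := by
  rw [Nat.Icc_eq_range']
  rfl

lemma spectrum_subset_Icc_of_nonneg {A : Type*} [CStarAlgebra A] [PartialOrder A]
    [StarOrderedRing A] {a : A} (ha : 0 ≤ a) {C : ℝ} (hC : ‖a‖ ≤ C) :
    spectrum ℝ a ⊆ Set.Icc 0 C := fun x hx =>
  ⟨spectrum_nonneg_of_nonneg ha hx, (le_algebraMap_iff_spectrum_le (IsSelfAdjoint.of_nonneg ha)).mp
    ((CStarAlgebra.norm_le_iff_le_algebraMap a ((norm_nonneg a).trans hC)).mp hC) x hx⟩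

section
variable {R A : Type*} {p : A → Prop} [CommSemiring R] [StarRing R] [MetricSpace R]
  [IsTopologicalSemiring R] [ContinuousStar R] [TopologicalSpace A] [Ring A] [StarRing A]
  [Algebra R A] [ContinuousFunctionalCalculus R A p]

lemma cfc_list_prod_map {ι : Type*} (l : List ι) (f : ι → R → R) (a : A)
    (hf : ∀ i ∈ l, ContinuousOn (f i) (spectrum R a)) (ha : p a := by cfc_tac) :
    cfc (fun x => (l.map (f · x)).prod) a = (l.map (fun i => cfc (f i) a)).prod := by
  induction l with
  | nil => simp [cfc_const_one R a]
  | cons i l ih =>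
    simp only [List.map_cons, List.prod_cons]
    rw [cfc_mul _ _ a (hf i (by simp)) (continuousOn_list_prod l fun j hj => hf j (by simp [hj])),
      ih fun j hj => hf j (by simp [hj])]

end

section
variable {R A : Type*} {p : A → Prop} [CommRing R] [StarRing R] [MetricSpace R]
  [IsTopologicalRing R] [ContinuousStar R] [TopologicalSpace A] [Ring A] [StarRing A]
  [Algebra R A] [ContinuousFunctionalCalculus R A p]

lemma cfc_one_sub_mul_add (c d : R) (a : A) (ha : p a := by cfc_tac) :
    cfc (fun x => 1 - c * (x + d)) a = 1 - c • (a + d • 1) := by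
  rw [cfc_sub .., cfc_const_one R a, cfc_const_mul .., cfc_add .., cfc_id' R a, cfc_const ..,
    Algebra.algebraMap_eq_smul_one]

end

theorem stmt0_general {H : Type*} [NormedAddCommGroup H] [InnerProductSpace ℂ H] [CompleteSpace H]
    (A : H →L[ℂ] H) (hA : A.IsPositive)
    (Cstar : ℝ) (hAC : ‖A‖ ≤ Cstar)
    (lam : ℝ) (hlam : 0 < lam)
    (t k : ℕ) (γ : ℕ → ℝ)
    (hγpos : ∀ j ∈ Finset.Icc t k, 0 < γ j)
    (hγ : ∀ j ∈ Finset.Icc t k, γ j * (Cstar + lam) ≤ 1)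
    (α : ℝ) (hα : 0 < α) :
    ‖cfc (fun x : ℝ => x ^ α) A *
        (((List.range' t (k + 1 - t)).map
          (fun j => (1 : H →L[ℂ] H) - γ j • (A + lam • (1 : H →L[ℂ] H)))).prod)‖ ^ 2 ≤
      ((α / Real.exp 1) ^ (2 * α) + Cstar ^ (2 * α)) /
        (Real.exp (lam * ∑ j ∈ Finset.Icc t k, γ j) *
          (1 + (∑ j ∈ Finset.Icc t k, γ j) ^ (2 * α))) := by
  have hsa : IsSelfAdjoint A := hA.isSelfAdjoint
  have hC : 0 ≤ Cstar := (norm_nonneg A).trans hAC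
  have hspec := spectrum_subset_Icc_of_nonneg (A.nonneg_iff_isPositive.mpr hA) hAC
  have hS : 0 ≤ ∑ j ∈ Finset.Icc t k, γ j := Finset.sum_nonneg fun j hj => (hγpos j hj).le
  simp only [← cfc_one_sub_mul_add _ _ A]
  rw [← cfc_list_prod_map _ _ A fun _ _ => by fun_prop,
    ← cfc_mul _ _ A (Real.continuous_rpow_const hα.le).continuousOn
      (continuousOn_list_prod _ fun _ _ => by fun_prop)]
  refine (Real.le_sqrt (norm_nonneg _) (by have := Real.rpow_nonneg hC (2 * α); positivity)).mp
    (norm_cfc_le (Real.sqrt_nonneg _) fun x hx => Real.abs_le_sqrt ?_)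
  obtain ⟨hx0, hxC⟩ := hspec hx
  have hfactor : ∀ j ∈ Finset.Icc t k, γ j * (x + lam) ≤ 1 := fun j hj =>
    (mul_le_mul_of_nonneg_left (by linarith) (hγpos j hj).le).trans (hγ j hj)
  rw [List.prod_map_range'_eq_prod_Icc]
  refine sq_rpow_mul_le_of_le_exp_neg hα hlam.le hS ⟨hx0, hxC⟩
    (Finset.prod_nonneg fun j hj => sub_nonneg.mpr (hfactor j hj)) ?_
  calc ∏ j ∈ Finset.Icc t k, (1 - γ j * (x + lam))
      ≤ exp (-∑ j ∈ Finset.Icc t k, γ j * (x + lam)) :=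
        Finset.prod_one_sub_le_exp_neg_sum _ hfactor
    _ = exp (-((x + lam) * ∑ j ∈ Finset.Icc t k, γ j)) := by rw [← Finset.sum_mul, mul_comm]

/-- Let `A` be a bounded self-adjoint positive operator on a separable
Hilbert space with `‖A‖ ≤ C*`, let `λ > 0`, and let `γ_t, …, γ_k` be positive reals with
`γ_j (C* + λ) ≤ 1`.  Then for every `α > 0`,
`‖A^α ∏_{j=t}^k (I − γ_j (A + λ I))‖² ≤ ((α/e)^{2α} + C*^{2α}) /
  (exp(λ ∑ γ_j) (1 + (∑ γ_j)^{2α}))`.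
Here `A^α` is given by the continuous functional calculus. -/
theorem stmt0 {H : Type*} [NormedAddCommGroup H] [InnerProductSpace ℂ H] [CompleteSpace H]
    [TopologicalSpace.SeparableSpace H]
    (A : H →L[ℂ] H) (hA : A.IsPositive)
    (Cstar : ℝ) (hCstar : 0 < Cstar) (hAC : ‖A‖ ≤ Cstar)
    (lam : ℝ) (hlam : 0 < lam)
    (t k : ℕ) (γ : ℕ → ℝ)
    (hγpos : ∀ j ∈ Finset.Icc t k, 0 < γ j)
    (hγ : ∀ j ∈ Finset.Icc t k, γ j * (Cstar + lam) ≤ 1)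
    (α : ℝ) (hα : 0 < α) :
    ‖cfc (fun x : ℝ => x ^ α) A *
        (((List.range' t (k + 1 - t)).map
          (fun j => (1 : H →L[ℂ] H) - γ j • (A + lam • (1 : H →L[ℂ] H)))).prod)‖ ^ 2 ≤
      ((α / Real.exp 1) ^ (2 * α) + Cstar ^ (2 * α)) /
        (Real.exp (lam * ∑ j ∈ Finset.Icc t k, γ j) *
          (1 + (∑ j ∈ Finset.Icc t k, γ j) ^ (2 * α))) :=
  stmt0_general A hA Cstar hAC lam hlam t k γ hγpos hγ α hα
end

section
/- Let γ > 0, λ ≥ 0, 0 < s ≤ 1, and n ≥ 1 an integer. Then ∑_{i=1}^{n} γ² exp(−λ γ (n−i)) / (1 + (γ(n−i))^{2−s}) ≤ γ² + γ · ((2−s)/(1−s)) if 0 < s < 1, and ≤ γ² + γ log(1 + γ n) if s = 1. -/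
/-!
With `λ ≥ 0` the exponential factors are at most `1`. Reindexing by `k = n - i`, the `k = 0`
term is `γ²`, and the term `γ² / (1 + (γk)^(2-s))` for `k ≥ 1` is at most `γ (F(γk) - F(γ(k-1)))`
whenever the increments of `F` dominate the integrand `1 / (1 + u^(2-s))` at the right endpoint,
so the sum telescopes to `γ² + γ (F(γ(n-1)) - F 0)`. For `s = 1` take `F u = log (1 + u)`; for
`s < 1` take the primitive of the decreasing majorant `min 1 (u^(s-2))`, which is bounded by
`1 + 1/(1-s) = (2-s)/(1-s)`.
-/

open Real Finset

theorem sum_Icc_comp_sub_eq_sum_range (g : ℝ → ℝ) (n : ℕ) :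
    ∑ i ∈ Icc 1 n, g ((n : ℝ) - i) = ∑ k ∈ range n, g k := by
  refine sum_nbij' (fun i ↦ n - i) (fun k ↦ n - k) ?_ ?_ ?_ ?_ ?_
  all_goals intro i hi; simp only [mem_Icc, mem_range] at hi
  · simp only [mem_range]; omega
  · simp only [mem_Icc]; omega
  · omega
  · omega
  · rw [Nat.cast_sub hi.2]

theorem sum_range_div_one_add_rpow_le_of_increment {p γ : ℝ} (hp : 0 < p) (hγ : 0 < γ)
    {F : ℝ → ℝ} (hF : ∀ a b, 0 ≤ a → a ≤ b → (b - a) / (1 + b ^ p) ≤ F b - F a) (m : ℕ) :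
    ∑ k ∈ range (m + 1), γ ^ 2 / (1 + (γ * k) ^ p) ≤ γ ^ 2 + γ * (F (γ * m) - F 0) := by
  have hstep (k : ℕ) : γ ^ 2 / (1 + (γ * (k + 1 : ℕ)) ^ p) ≤
      γ * (F (γ * (k + 1 : ℕ)) - F (γ * k)) := by
    have := hF (γ * k) (γ * (k + 1 : ℕ)) (by positivity) (by gcongr; omega)
    calc γ ^ 2 / (1 + (γ * (k + 1 : ℕ)) ^ p)
        = γ * ((γ * (k + 1 : ℕ) - γ * k) / (1 + (γ * (k + 1 : ℕ)) ^ p)) := by push_cast; ring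
      _ ≤ _ := by gcongr
  calc ∑ k ∈ range (m + 1), γ ^ 2 / (1 + (γ * k) ^ p)
      = ∑ k ∈ range m, γ ^ 2 / (1 + (γ * (k + 1 : ℕ)) ^ p) + γ ^ 2 := by
        simp [sum_range_succ', zero_rpow hp.ne']
    _ ≤ ∑ k ∈ range m, γ * (F (γ * (k + 1 : ℕ)) - F (γ * k)) + γ ^ 2 := by
        gcongr with k; exact hstep k
    _ = γ ^ 2 + γ * (F (γ * m) - F 0) := by
        rw [← mul_sum, sum_range_sub (fun k ↦ F (γ * k))]; simp [add_comm]

theorem sum_exp_div_le_sum_range (γ lam p : ℝ) (hγ : 0 < γ) (hlam : 0 ≤ lam) (n : ℕ) :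
    ∑ i ∈ Icc 1 n, γ ^ 2 * exp (-(lam * γ * ((n : ℝ) - i))) / (1 + (γ * ((n : ℝ) - i)) ^ p) ≤
      ∑ k ∈ range n, γ ^ 2 / (1 + (γ * k) ^ p) := by
  rw [sum_Icc_comp_sub_eq_sum_range (fun x ↦ γ ^ 2 * exp (-(lam * γ * x)) / (1 + (γ * x) ^ p))]
  gcongr with k
  exact mul_le_of_le_one_right (by positivity) (exp_le_one_iff.mpr (by simp; positivity))

theorem sub_div_le_log_sub_log {x y : ℝ} (hx : 0 < x) (hy : 0 < y) :
    (y - x) / y ≤ log y - log x := by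
  have := one_sub_inv_le_log_of_pos (div_pos hy hx)
  rw [log_div hy.ne' hx.ne', inv_div] at this
  calc (y - x) / y = 1 - x / y := by field_simp
    _ ≤ _ := this

theorem one_add_mul_one_sub_le_rpow_neg {q t : ℝ} (hq : 0 ≤ q) (ht : 0 < t) :
    1 + q * (1 - t) ≤ t ^ (-q) := by
  calc 1 + q * (1 - t) ≤ 1 + -q * log t := by
        nlinarith [log_le_sub_one_of_pos ht]
    _ ≤ exp (-q * log t) := by linarith [add_one_le_exp (-q * log t)]
    _ = t ^ (-q) := by rw [rpow_def_of_pos ht, mul_comm]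

/-- Tangent-line inequality at `b` for the convex function `x ↦ x ^ (-q)`. -/
theorem mul_sub_mul_rpow_le_rpow_neg_sub_rpow_neg {q a b : ℝ} (hq : 0 ≤ q) (ha : 0 < a)
    (hb : 0 < b) : q * (b - a) * b ^ (-q - 1) ≤ a ^ (-q) - b ^ (-q) := by
  have key := mul_le_mul_of_nonneg_right (one_add_mul_one_sub_le_rpow_neg hq (div_pos ha hb))
    (rpow_nonneg hb.le (-q))
  rw [div_rpow ha.le hb.le, div_mul_cancel₀ _ (rpow_pos_of_pos hb _).ne'] at key
  rw [rpow_sub_one hb.ne']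
  have : (1 + q * (1 - a / b)) * b ^ (-q) = b ^ (-q) + q * (b - a) * (b ^ (-q) / b) := by
    field_simp
  linarith

/-- The primitive of `min 1 (u ^ (-(1 + q)))` vanishing at `0`. -/
noncomputable def cappedPowerPrimitive (q x : ℝ) : ℝ :=
  if x ≤ 1 then x else 1 + (1 - x ^ (-q)) / q

@[simp]
theorem cappedPowerPrimitive_zero (q : ℝ) : cappedPowerPrimitive q 0 = 0 := by
  simp [cappedPowerPrimitive]

theorem cappedPowerPrimitive_le {q : ℝ} (hq : 0 < q) (x : ℝ) :
    cappedPowerPrimitive q x ≤ 1 + 1 / q := by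
  unfold cappedPowerPrimitive
  split_ifs with hx
  · linarith [one_div_pos.mpr hq]
  · have := rpow_nonneg (zero_le_one.trans (not_le.mp hx).le) (-q)
    gcongr; linarith

theorem sub_div_le_cappedPowerPrimitive_sub {q a b : ℝ} (hq : 0 < q) (ha : 0 ≤ a) (hab : a ≤ b) :
    (b - a) / (1 + b ^ (1 + q)) ≤ cappedPowerPrimitive q b - cappedPowerPrimitive q a := by
  unfold cappedPowerPrimitive
  rcases le_or_gt b 1 with hb1 | hb1
  · rw [if_pos hb1, if_pos (hab.trans hb1)]
    exact div_le_self (by linarith) (le_add_of_nonneg_right (rpow_nonneg (ha.trans hab) _))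
  have hb : 0 < b := one_pos.trans hb1
  have hdecay : (b - a) / (1 + b ^ (1 + q)) ≤ (b - a) * b ^ (-q - 1) := by
    rw [show -q - 1 = -(1 + q) by ring, rpow_neg hb.le, ← div_eq_mul_inv]
    exact div_le_div_of_nonneg_left (by linarith) (rpow_pos_of_pos hb _) (by linarith)
  rw [if_neg hb1.not_ge]
  rcases le_or_gt a 1 with ha1 | ha1
  · rw [if_pos ha1]
    have htangent := mul_sub_mul_rpow_le_rpow_neg_sub_rpow_neg hq.le one_pos hb
    rw [one_rpow] at htangent
    have hsmall : b ^ (-q - 1) ≤ 1 := rpow_le_one_of_one_le_of_nonpos hb1.le (by linarith)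
    have hfar : (b - 1) * b ^ (-q - 1) ≤ (1 - b ^ (-q)) / q := by
      rw [le_div_iff₀ hq]; linarith
    calc (b - a) / (1 + b ^ (1 + q)) ≤ (b - a) * b ^ (-q - 1) := hdecay
      _ = (b - 1) * b ^ (-q - 1) + (1 - a) * b ^ (-q - 1) := by ring
      _ ≤ (1 - b ^ (-q)) / q + (1 - a) :=
          add_le_add hfar (mul_le_of_le_one_right (by linarith) hsmall)
      _ = _ := by ring
  · rw [if_neg ha1.not_ge]
    have htangent := mul_sub_mul_rpow_le_rpow_neg_sub_rpow_neg hq.le (one_pos.trans ha1) hb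
    calc (b - a) / (1 + b ^ (1 + q)) ≤ (b - a) * b ^ (-q - 1) := hdecay
      _ ≤ (a ^ (-q) - b ^ (-q)) / q := by rw [le_div_iff₀ hq]; linarith
      _ = _ := by ring

theorem stmt10_general (γ lam s : ℝ) (hγ : 0 < γ) (hlam : 0 ≤ lam)
    (n : ℕ) (hn : 1 ≤ n) :
    (s < 1 →
      ∑ i ∈ Finset.Icc 1 n,
          γ ^ 2 * Real.exp (-(lam * γ * ((n : ℝ) - (i : ℝ)))) /
            (1 + (γ * ((n : ℝ) - (i : ℝ))) ^ (2 - s)) ≤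
        γ ^ 2 + γ * ((2 - s) / (1 - s))) ∧
    (s = 1 →
      ∑ i ∈ Finset.Icc 1 n,
          γ ^ 2 * Real.exp (-(lam * γ * ((n : ℝ) - (i : ℝ)))) /
            (1 + (γ * ((n : ℝ) - (i : ℝ))) ^ (2 - s)) ≤
        γ ^ 2 + γ * Real.log (1 + γ * (n : ℝ))) := by
  obtain ⟨m, rfl⟩ := Nat.exists_eq_add_of_le' hn
  have hdrop := sum_exp_div_le_sum_range γ lam (2 - s) hγ hlam (m + 1)
  constructor
  · intro hs
    have hq : 0 < 1 - s := by linarith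
    have hstep (a b : ℝ) (ha : 0 ≤ a) (hab : a ≤ b) :
        (b - a) / (1 + b ^ (2 - s)) ≤
          cappedPowerPrimitive (1 - s) b - cappedPowerPrimitive (1 - s) a := by
      rw [show 2 - s = 1 + (1 - s) by ring]
      exact sub_div_le_cappedPowerPrimitive_sub hq ha hab
    have hlimit : (2 - s) / (1 - s) = 1 + 1 / (1 - s) := by field_simp; ring
    refine (hdrop.trans
      (sum_range_div_one_add_rpow_le_of_increment (by linarith) hγ hstep m)).trans ?_
    rw [hlimit, cappedPowerPrimitive_zero, sub_zero]
    gcongr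
    exact cappedPowerPrimitive_le hq _
  · rintro rfl
    have hstep (a b : ℝ) (ha : 0 ≤ a) (_ : a ≤ b) :
        (b - a) / (1 + b ^ (1 : ℝ)) ≤ log (1 + b) - log (1 + a) := by
      have := sub_div_le_log_sub_log (x := 1 + a) (y := 1 + b) (by linarith) (by linarith)
      rw [rpow_one]; rwa [add_sub_add_left_eq_sub] at this
    rw [show (2 : ℝ) - 1 = 1 by norm_num] at hdrop ⊢
    refine (hdrop.trans (sum_range_div_one_add_rpow_le_of_increment one_pos hγ hstep m)).trans ?_
    rw [add_zero, log_one, sub_zero]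
    gcongr
    simp

/-- For constant step-size `γ > 0`, `λ ≥ 0`, `0 < s ≤ 1`, `n ≥ 1`:
`∑_{i=1}^n γ² exp(−λγ(n−i))/(1+(γ(n−i))^{2−s})` is at most `γ² + γ (2−s)/(1−s)`
when `s < 1`, and at most `γ² + γ log(1+γn)` when `s = 1`. -/
theorem stmt10 (γ lam s : ℝ) (hγ : 0 < γ) (hlam : 0 ≤ lam) (hs0 : 0 < s) (hs1 : s ≤ 1)
    (n : ℕ) (hn : 1 ≤ n) :
    (s < 1 →
      ∑ i ∈ Finset.Icc 1 n,
          γ ^ 2 * Real.exp (-(lam * γ * ((n : ℝ) - (i : ℝ)))) /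
            (1 + (γ * ((n : ℝ) - (i : ℝ))) ^ (2 - s)) ≤
        γ ^ 2 + γ * ((2 - s) / (1 - s))) ∧
    (s = 1 →
      ∑ i ∈ Finset.Icc 1 n,
          γ ^ 2 * Real.exp (-(lam * γ * ((n : ℝ) - (i : ℝ)))) /
            (1 + (γ * ((n : ℝ) - (i : ℝ))) ^ (2 - s)) ≤
        γ ^ 2 + γ * Real.log (1 + γ * (n : ℝ))) :=
  stmt10_general γ lam s hγ hlam n hn
end

section
/- Let T be a bounded self-adjoint positive operator on a Hilbert space H, λ > 0, 0 < θ ≤ 1, and g ∈ H. Define h = (λ I + T)^{−1} T^{1+θ} g and h* = T^{θ} g. Then ‖h − h*‖ ≤ λ^{θ} ‖g‖. -/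
/-!
Everything is a function of `T`, so by the continuous functional calculus the error operator
`(λ + T)⁻¹ T^{1+θ} - T^θ` is `f(T)` with `f(x) = -λ x^θ / (λ + x)`, and its norm is bounded by the
supremum of `|f|` on the spectrum `σ(T) ⊆ [0, ∞)`. There weighted AM–GM gives
`λ^{1-θ} x^θ ≤ (1 - θ) λ + θ x ≤ λ + x`, i.e. `|f(x)| ≤ λ^θ`.
-/

lemma Real.mul_rpow_le_rpow_mul_add {r x θ : ℝ} (hr : 0 ≤ r) (hx : 0 ≤ x)
    (hθ0 : 0 ≤ θ) (hθ1 : θ ≤ 1) : r * x ^ θ ≤ r ^ θ * (r + x) := by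
  have amgm : r ^ (1 - θ) * x ^ θ ≤ (1 - θ) * r + θ * x :=
    Real.geom_mean_le_arith_mean2_weighted (by linarith) hθ0 hr hx (by ring)
  have hsplit : r ^ θ * r ^ (1 - θ) = r := by
    rw [← Real.rpow_add' hr (by norm_num), add_sub_cancel, Real.rpow_one]
  calc r * x ^ θ = r ^ θ * (r ^ (1 - θ) * x ^ θ) := by rw [← mul_assoc, hsplit]
    _ ≤ r ^ θ * ((1 - θ) * r + θ * x) := by gcongr
    _ ≤ r ^ θ * (r + x) := by gcongr r ^ θ * ?_; nlinarith

lemma Real.inv_add_mul_rpow_one_add_sub_rpow {r x θ : ℝ} (hx : 0 ≤ x) (hθ : 0 ≤ θ)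
    (hrx : r + x ≠ 0) : (r + x)⁻¹ * x ^ (1 + θ) - x ^ θ = -(r * x ^ θ / (r + x)) := by
  rw [Real.rpow_one_add' hx (by positivity)]
  field_simp
  ring

lemma Real.norm_inv_add_mul_rpow_one_add_sub_rpow_le {r x θ : ℝ} (hr : 0 < r) (hx : 0 ≤ x)
    (hθ0 : 0 ≤ θ) (hθ1 : θ ≤ 1) : ‖(r + x)⁻¹ * x ^ (1 + θ) - x ^ θ‖ ≤ r ^ θ := by
  have hrx : 0 < r + x := by positivity
  rw [Real.inv_add_mul_rpow_one_add_sub_rpow hx hθ0 hrx.ne', norm_neg,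
    Real.norm_of_nonneg (by positivity), div_le_iff₀ hrx]
  exact Real.mul_rpow_le_rpow_mul_add hr.le hx hθ0 hθ1

section CStarAlgebra

variable {A : Type*} [CStarAlgebra A] [PartialOrder A] [StarOrderedRing A] {a : A}

lemma ringInverse_smul_one_add_eq_cfc {r : ℝ} (hr : 0 < r) (ha : 0 ≤ a) :
    Ring.inverse (r • (1 : A) + a) = cfc (fun x : ℝ => (r + x)⁻¹) a := by
  have hne : ∀ x ∈ spectrum ℝ a, r + x ≠ 0 := fun x hx =>
    (add_pos_of_pos_of_nonneg hr (spectrum_nonneg_of_nonneg ha hx)).ne'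
  rw [cfc_inv (fun x : ℝ => r + x) a hne, cfc_const_add r (fun x : ℝ => x) a, cfc_id' ℝ a,
    Algebra.algebraMap_eq_smul_one]

lemma ringInverse_smul_one_add_mul_cfc_rpow_one_add_sub_cfc_rpow {r θ : ℝ} (hr : 0 < r)
    (hθ : 0 ≤ θ) (ha : 0 ≤ a) :
    Ring.inverse (r • (1 : A) + a) * cfc (fun x : ℝ => x ^ (1 + θ)) a -
        cfc (fun x : ℝ => x ^ θ) a =
      cfc (fun x : ℝ => (r + x)⁻¹ * x ^ (1 + θ) - x ^ θ) a := by
  have hinv : ContinuousOn (fun x : ℝ => (r + x)⁻¹) (spectrum ℝ a) :=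
    ContinuousOn.inv₀ (by fun_prop) fun x hx =>
      (add_pos_of_pos_of_nonneg hr (spectrum_nonneg_of_nonneg ha hx)).ne'
  have hpow : ∀ s : ℝ, 0 ≤ s → ContinuousOn (fun x : ℝ => x ^ s) (spectrum ℝ a) :=
    fun s hs => (Real.continuous_rpow_const hs).continuousOn
  rw [ringInverse_smul_one_add_eq_cfc hr ha, ← cfc_mul _ _ a hinv (hpow _ (by positivity)),
    ← cfc_sub (fun x : ℝ => (r + x)⁻¹ * x ^ (1 + θ)) (fun x : ℝ => x ^ θ) a
      (hinv.mul (hpow _ (by positivity))) (hpow θ hθ)]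

lemma norm_ringInverse_smul_one_add_mul_cfc_rpow_one_add_sub_cfc_rpow_le {r θ : ℝ} (hr : 0 < r)
    (hθ0 : 0 ≤ θ) (hθ1 : θ ≤ 1) (ha : 0 ≤ a) :
    ‖Ring.inverse (r • (1 : A) + a) * cfc (fun x : ℝ => x ^ (1 + θ)) a -
        cfc (fun x : ℝ => x ^ θ) a‖ ≤ r ^ θ := by
  rw [ringInverse_smul_one_add_mul_cfc_rpow_one_add_sub_cfc_rpow hr hθ0 ha]
  exact norm_cfc_le (by positivity) fun x hx =>
    Real.norm_inv_add_mul_rpow_one_add_sub_rpow_le hr (spectrum_nonneg_of_nonneg ha hx) hθ0 hθ1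

end CStarAlgebra

/-- Let `T` be a bounded self-adjoint positive operator on a Hilbert
space `H`, `λ > 0`, `0 < θ ≤ 1` and `g ∈ H`.  With `h = (λI + T)⁻¹ T^{1+θ} g` and
`h* = T^θ g`, one has `‖h − h*‖ ≤ λ^θ ‖g‖`. -/
theorem stmt16 {H : Type*} [NormedAddCommGroup H] [InnerProductSpace ℂ H] [CompleteSpace H]
    (T : H →L[ℂ] H) (hT : T.IsPositive)
    (lam θ : ℝ) (hlam : 0 < lam) (hθ0 : 0 < θ) (hθ1 : θ ≤ 1) (g : H) :
    ‖(Ring.inverse (lam • (1 : H →L[ℂ] H) + T) * cfc (fun x : ℝ => x ^ (1 + θ)) T) g -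
        (cfc (fun x : ℝ => x ^ θ) T) g‖ ≤ lam ^ θ * ‖g‖ := by
  have hTnonneg : 0 ≤ T := (ContinuousLinearMap.nonneg_iff_isPositive T).mpr hT
  calc _ = ‖(Ring.inverse (lam • (1 : H →L[ℂ] H) + T) * cfc (fun x : ℝ => x ^ (1 + θ)) T -
          cfc (fun x : ℝ => x ^ θ) T) g‖ := rfl
    _ ≤ _ * ‖g‖ := ContinuousLinearMap.le_opNorm _ g
    _ ≤ lam ^ θ * ‖g‖ := by
      gcongr
      exact norm_ringInverse_smul_one_add_mul_cfc_rpow_one_add_sub_cfc_rpow_le hlam hθ0.le hθ1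
        hTnonneg
end

section
/- Let λ > 0, ν > 1, γ₁ ∈ (0,1), 0 < μ < 1, and γ_j = γ₁ j^{−μ}. Then there is a constant C (depending only on μ, ν, γ₁, but not on k or λ) such that for all integers k ≥ 1, ∑_{i=1}^{k} γ_i² exp(−λ ∑_{j=i+1}^{k} γ_j) / (1 + (∑_{j=i+1}^{k} γ_j)^{ν}) ≤ C γ₁ ( exp(−λ γ₁ d_μ k^{1−μ}) k^{−min{μ, ν(1−μ)}} + k^{−μ} ), where d_μ = (1 − 2^{μ−1})/(1−μ). -/
/-!
Write `S_i = ∑_{j=i+1}^k γ_j`. For `i ≤ (k-1)/2`, comparing with `∫ x^(-μ)` gives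
`S_i ≥ γ₁ d_μ k^(1-μ) =: D`, so those terms are at most
`γ₁² e^(-λD) D^(-ν) ∑_{i ≤ k} i^(-2μ)`, and `∑_{i ≤ k} i^(-2μ) = O(k^(ν(1-μ) - min(μ, ν(1-μ))))`.
For `i > (k-1)/2` one has `γ_i ≤ 2B` with `B = γ₁ k^(-μ)` and `S_i ≥ B (k - i)`, so those terms
sum to at most `4B² ∑_m (1 + (Bm)^ν)⁻¹`, which is `O(B)` because `ν > 1`.
-/

open Finset Real

theorem sum_Icc_rpow_le_of_neg {p : ℝ} (hp : p < 0) (hp1 : p ≠ -1) {a b : ℕ} (ha : 1 ≤ a)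
    (hab : a ≤ b) :
    ∑ j ∈ Icc (a + 1) b, (j : ℝ) ^ p ≤ ((b : ℝ) ^ (p + 1) - (a : ℝ) ^ (p + 1)) / (p + 1) := by
  have ha' : (0 : ℝ) < a := by exact_mod_cast ha
  rw [← integral_rpow (Or.inr ⟨hp1, fun h => by
    rw [Set.uIcc_of_le (by exact_mod_cast hab)] at h; linarith [h.1]⟩),
    ← Ico_add_one_right_eq_Icc, ← Finset.sum_Ico_add' (fun n : ℕ => (n : ℝ) ^ p) a b 1]
  exact AntitoneOn.sum_le_integral_Ico hab
    ((antitoneOn_rpow_Ioi_of_exponent_nonpos hp.le).mono fun x hx => ha'.trans_le hx.1)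

theorem integral_le_sum_Icc_rpow {p : ℝ} (hp : -1 < p) (hp0 : p < 0) {a b : ℕ} (hab : a ≤ b) :
    (((b : ℝ) + 1) ^ (p + 1) - ((a : ℝ) + 1) ^ (p + 1)) / (p + 1)
      ≤ ∑ j ∈ Icc (a + 1) b, (j : ℝ) ^ p := by
  have hint : ∫ x in ((a + 1 : ℕ) : ℝ)..((b + 1 : ℕ) : ℝ), x ^ p
      = (((b : ℝ) + 1) ^ (p + 1) - ((a : ℝ) + 1) ^ (p + 1)) / (p + 1) := by
    rw [integral_rpow (Or.inl hp)]
    push_cast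
    ring_nf
  rw [← hint, ← Ico_add_one_right_eq_Icc]
  exact AntitoneOn.integral_le_sum_Ico (by omega)
    ((antitoneOn_rpow_Ioi_of_exponent_nonpos hp0.le).mono fun x hx =>
      lt_of_lt_of_le (by positivity) hx.1)

theorem sum_Icc_rpow_neg_le {q : ℝ} (hq : 1 < q) {a : ℕ} (ha : 1 ≤ a) (b : ℕ) :
    ∑ j ∈ Icc (a + 1) b, (j : ℝ) ^ (-q) ≤ (a : ℝ) ^ (1 - q) / (q - 1) := by
  rcases le_or_gt a b with hab | hba
  · have hb : 0 ≤ (b : ℝ) ^ (1 - q) := by positivity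
    calc ∑ j ∈ Icc (a + 1) b, (j : ℝ) ^ (-q)
        ≤ ((b : ℝ) ^ (-q + 1) - (a : ℝ) ^ (-q + 1)) / (-q + 1) :=
          sum_Icc_rpow_le_of_neg (by linarith) (by intro h; linarith) ha hab
      _ = ((a : ℝ) ^ (1 - q) - (b : ℝ) ^ (1 - q)) / (q - 1) := by
          rw [neg_add_eq_sub, ← neg_sub q 1, div_neg, ← neg_div, neg_sub]
      _ ≤ (a : ℝ) ^ (1 - q) / (q - 1) := by
          gcongr
          linarith
  · rw [Icc_eq_empty (by omega), sum_empty]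
    exact div_nonneg (by positivity) (by linarith)

theorem sum_Icc_rpow_sub_one_le {t : ℝ} (ht : 0 < t) {k : ℕ} (hk : 1 ≤ k) :
    ∑ i ∈ Icc 1 k, (i : ℝ) ^ (t - 1) ≤ (1 + 1 / t) * (k : ℝ) ^ t := by
  have hk' : (1 : ℝ) ≤ k := by exact_mod_cast hk
  have hkt : 1 ≤ (k : ℝ) ^ t := one_le_rpow hk' ht.le
  rcases le_or_gt 1 t with h1 | h1
  · calc ∑ i ∈ Icc 1 k, (i : ℝ) ^ (t - 1)
        ≤ ∑ _i ∈ Icc 1 k, (k : ℝ) ^ (t - 1) := by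
          refine sum_le_sum fun i hi => ?_
          obtain ⟨hi1, hik⟩ := mem_Icc.mp hi
          exact rpow_le_rpow (by positivity) (by exact_mod_cast hik) (by linarith)
      _ = (k : ℝ) ^ t := by
          rw [sum_const, Nat.card_Icc, Nat.add_sub_cancel, nsmul_eq_mul,
            ← rpow_one_add' (by positivity) (by linarith), add_sub_cancel]
      _ ≤ (1 + 1 / t) * (k : ℝ) ^ t := le_mul_of_one_le_left (by positivity)
          (le_add_of_nonneg_right (by positivity))
  · rw [← insert_Icc_add_one_left_eq_Icc hk, sum_insert (by simp), Nat.cast_one, one_rpow]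
    have := sum_Icc_rpow_le_of_neg (p := t - 1) (by linarith) (by intro h; linarith) le_rfl hk
    rw [sub_add_cancel, Nat.cast_one, one_rpow] at this
    have : ((k : ℝ) ^ t - 1) / t ≤ (k : ℝ) ^ t / t := by gcongr; linarith
    rw [add_mul, one_mul, one_div_mul_eq_div]
    linarith

theorem exists_sum_Icc_rpow_neg_le {q s : ℝ} (hs : 0 ≤ s) (hqs : 1 - q < s) :
    ∃ C > 0, ∀ k : ℕ, 1 ≤ k → ∑ i ∈ Icc 1 k, (i : ℝ) ^ (-q) ≤ C * (k : ℝ) ^ s := by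
  rcases hs.eq_or_lt with rfl | hs
  · have hq : 0 < q - 1 := by linarith
    refine ⟨1 + 1 / (q - 1), by positivity, fun k hk => ?_⟩
    rw [← insert_Icc_add_one_left_eq_Icc hk, sum_insert (by simp), rpow_zero, mul_one,
      Nat.cast_one, one_rpow]
    have := sum_Icc_rpow_neg_le (by linarith) le_rfl k
    rw [Nat.cast_one, one_rpow] at this
    linarith
  · refine ⟨1 + 1 / s, by positivity, fun k hk => ?_⟩
    calc ∑ i ∈ Icc 1 k, (i : ℝ) ^ (-q)
        ≤ ∑ i ∈ Icc 1 k, (i : ℝ) ^ (s - 1) := by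
          refine sum_le_sum fun i hi => rpow_le_rpow_of_exponent_le ?_ (by linarith)
          exact_mod_cast (mem_Icc.mp hi).1
      _ ≤ (1 + 1 / s) * (k : ℝ) ^ s := sum_Icc_rpow_sub_one_le hs hk

theorem sum_range_inv_one_add_rpow_le {ν : ℝ} (hν : 1 < ν) {B : ℝ} (hB : 0 < B) (k : ℕ) :
    ∑ m ∈ range k, (1 + (B * m) ^ ν)⁻¹ ≤ 2 + ν / (ν - 1) / B := by
  set M := ⌈1 / B⌉₊
  have hM1 : 1 ≤ M := Nat.one_le_ceil_iff.mpr (by positivity)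
  have hMB : 1 / B ≤ M := Nat.le_ceil _
  have hhead : ∑ m ∈ range (M + 1), (1 + (B * m) ^ ν)⁻¹ ≤ 1 / B + 2 := by
    calc ∑ m ∈ range (M + 1), (1 + (B * m) ^ ν)⁻¹ ≤ ∑ _m ∈ range (M + 1), (1 : ℝ) :=
          sum_le_sum fun m _ => inv_le_one_of_one_le₀ (le_add_of_nonneg_right (by positivity))
      _ ≤ 1 / B + 2 := by
          simp only [sum_const, card_range, nsmul_eq_mul, mul_one, Nat.cast_add, Nat.cast_one]
          linarith [Nat.ceil_lt_add_one (by positivity : (0 : ℝ) ≤ 1 / B)]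
  -- beyond `1 / B` the terms are comparable to `(B m)^(-ν)`, whose tail sum is `O(1 / B)`
  have htail : ∑ m ∈ Icc (M + 1) k, (1 + (B * m) ^ ν)⁻¹ ≤ 1 / B / (ν - 1) := by
    calc ∑ m ∈ Icc (M + 1) k, (1 + (B * m) ^ ν)⁻¹
        ≤ ∑ m ∈ Icc (M + 1) k, B ^ (-ν) * (m : ℝ) ^ (-ν) := by
          refine sum_le_sum fun m hm => ?_
          have hm : (0 : ℝ) < m := by
            have := (mem_Icc.mp hm).1; exact_mod_cast (by omega : 0 < m)
          rw [← mul_rpow hB.le hm.le, rpow_neg (by positivity)]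
          exact inv_anti₀ (by positivity) (by linarith)
      _ = B ^ (-ν) * ∑ m ∈ Icc (M + 1) k, (m : ℝ) ^ (-ν) := by rw [mul_sum]
      _ ≤ B ^ (-ν) * ((1 / B) ^ (1 - ν) / (ν - 1)) := by
          gcongr
          refine (sum_Icc_rpow_neg_le hν hM1 k).trans ?_
          exact div_le_div_of_nonneg_right
            (rpow_le_rpow_of_nonpos (by positivity) hMB (by linarith)) (by linarith)
      _ = 1 / B / (ν - 1) := by
          rw [one_div B, inv_rpow hB.le, ← rpow_neg hB.le, mul_div_assoc', ← rpow_add hB,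
            neg_sub, show -ν + (ν - 1) = -1 by ring, rpow_neg_one]
  have hsplit : range k ⊆ range (M + 1) ∪ Icc (M + 1) k := fun m hm => by
    simp only [mem_union, mem_range, mem_Icc] at hm ⊢; omega
  have hdisj : Disjoint (range (M + 1)) (Icc (M + 1) k) :=
    disjoint_left.mpr fun m hm hm' => by simp only [mem_range, mem_Icc] at hm hm'; omega
  calc ∑ m ∈ range k, (1 + (B * m) ^ ν)⁻¹
      ≤ ∑ m ∈ range (M + 1) ∪ Icc (M + 1) k, (1 + (B * m) ^ ν)⁻¹ :=
        sum_le_sum_of_subset_of_nonneg hsplit fun m _ _ => by positivity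
    _ ≤ (1 / B + 2) + 1 / B / (ν - 1) := by rw [sum_union hdisj]; exact add_le_add hhead htail
    _ = 2 + ν / (ν - 1) / B := by
        have : ν - 1 ≠ 0 := by linarith
        field_simp
        ring

/-- The constant `d_μ`. -/
noncomputable def tailConstant (μ : ℝ) : ℝ := (1 - 2 ^ (μ - 1)) / (1 - μ)

theorem tailConstant_pos {μ : ℝ} (hμ : μ < 1) : 0 < tailConstant μ :=
  div_pos (sub_pos.mpr (rpow_lt_one_of_one_lt_of_neg one_lt_two (by linarith))) (by linarith)

theorem tailConstant_mul_rpow_le_sum_Icc {μ : ℝ} (hμ0 : 0 < μ) (hμ1 : μ < 1) {i k : ℕ}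
    (hik : 2 * i + 1 ≤ k) :
    tailConstant μ * (k : ℝ) ^ (1 - μ) ≤ ∑ j ∈ Icc (i + 1) k, (j : ℝ) ^ (-μ) := by
  have hint := integral_le_sum_Icc_rpow (p := -μ) (by linarith) (by linarith)
    (a := i) (b := k) (by omega)
  rw [neg_add_eq_sub] at hint
  refine le_trans ?_ hint
  -- `i + 1 ≤ (k + 1) / 2`, so the integral of `x^(-μ)` over `[i + 1, k + 1]` is at least
  -- `(1 - 2^(μ - 1))` times the one over `[0, k + 1]`
  have hhalf : ((i : ℝ) + 1) ^ (1 - μ) ≤ ((k : ℝ) + 1) ^ (1 - μ) * 2 ^ (μ - 1) := by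
    have hcast : (2 : ℝ) * i + 2 ≤ k + 1 := by exact_mod_cast (by omega : 2 * i + 2 ≤ k + 1)
    calc ((i : ℝ) + 1) ^ (1 - μ) ≤ (((k : ℝ) + 1) / 2) ^ (1 - μ) :=
          rpow_le_rpow (by positivity) (by linarith) (by linarith)
      _ = ((k : ℝ) + 1) ^ (1 - μ) * 2 ^ (μ - 1) := by
          rw [div_rpow (by positivity) (by norm_num), div_eq_mul_inv, ← rpow_neg (by norm_num),
            neg_sub]
  have hk : (k : ℝ) ^ (1 - μ) ≤ ((k : ℝ) + 1) ^ (1 - μ) :=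
    rpow_le_rpow (by positivity) (by linarith) (by linarith)
  have h2 : (2 : ℝ) ^ (μ - 1) < 1 := rpow_lt_one_of_one_lt_of_neg one_lt_two (by linarith)
  rw [tailConstant, div_mul_eq_mul_div]
  gcongr
  nlinarith [mul_le_mul_of_nonneg_left hk (sub_nonneg.mpr h2.le)]

theorem natSub_mul_rpow_le_sum_Icc {μ : ℝ} (hμ : 0 ≤ μ) (i k : ℕ) :
    ((k - i : ℕ) : ℝ) * (k : ℝ) ^ (-μ) ≤ ∑ j ∈ Icc (i + 1) k, (j : ℝ) ^ (-μ) := by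
  have h := card_nsmul_le_sum (Icc (i + 1) k) (fun j : ℕ => (j : ℝ) ^ (-μ)) ((k : ℝ) ^ (-μ))
    fun j hj => rpow_le_rpow_of_nonpos (Nat.cast_pos.mpr (by have := (mem_Icc.mp hj).1; omega))
      (by exact_mod_cast (mem_Icc.mp hj).2) (by linarith)
  rwa [Nat.card_Icc, Nat.add_sub_add_right, nsmul_eq_mul] at h

theorem rpow_neg_le_two_mul_rpow_neg {μ : ℝ} (hμ0 : 0 ≤ μ) (hμ1 : μ ≤ 1) {x y : ℝ} (hy : 0 < y)
    (hyx : y ≤ 2 * x) : x ^ (-μ) ≤ 2 * y ^ (-μ) := by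
  have hx : 0 < x := by linarith
  calc x ^ (-μ) = 2 ^ μ * (2 * x) ^ (-μ) := by
        rw [mul_rpow zero_le_two hx.le, ← mul_assoc, ← rpow_add two_pos, add_neg_cancel,
          rpow_zero, one_mul]
    _ ≤ 2 * y ^ (-μ) :=
        mul_le_mul (by simpa using rpow_le_rpow_of_exponent_le one_le_two hμ1)
          (rpow_le_rpow_of_nonpos hy hyx (by linarith)) (by positivity) zero_le_two

noncomputable def decayWeight (lam ν s : ℝ) : ℝ := exp (-(lam * s)) / (1 + s ^ ν)

section

variable {lam ν : ℝ}

theorem decayWeight_le_of_le (hlam : 0 ≤ lam) (hν : 0 ≤ ν) {a b : ℝ} (ha : 0 ≤ a)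
    (hab : a ≤ b) : decayWeight lam ν b ≤ decayWeight lam ν a :=
  div_le_div₀ (exp_pos _).le (exp_le_exp.mpr (by nlinarith)) (by positivity) (by gcongr)

theorem decayWeight_le_exp_div_rpow {s : ℝ} (hs : 0 < s) :
    decayWeight lam ν s ≤ exp (-(lam * s)) / s ^ ν :=
  div_le_div_of_nonneg_left (exp_pos _).le (by positivity) (by linarith)

theorem decayWeight_le_inv (hlam : 0 ≤ lam) {s : ℝ} (hs : 0 ≤ s) :
    decayWeight lam ν s ≤ (1 + s ^ ν)⁻¹ := by
  rw [decayWeight, div_eq_mul_inv]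
  exact mul_le_of_le_one_left (by positivity) (exp_le_one_iff.mpr (by nlinarith))

end

section

variable {lam ν γ₁ μ : ℝ} {k : ℕ}

theorem sum_Icc_head_sq_mul_decayWeight_le (hlam : 0 ≤ lam) (hν : 0 ≤ ν) (hγ₁ : 0 < γ₁)
    (hμ0 : 0 < μ) (hμ1 : μ < 1) (hk : 1 ≤ k) {C : ℝ}
    (hC : ∑ i ∈ Icc 1 k, (i : ℝ) ^ (-(2 * μ)) ≤
      C * (k : ℝ) ^ (ν * (1 - μ) - min μ (ν * (1 - μ)))) :
    ∑ i ∈ Icc 1 ((k - 1) / 2), (γ₁ * (i : ℝ) ^ (-μ)) ^ 2 *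
        decayWeight lam ν (∑ j ∈ Icc (i + 1) k, γ₁ * (j : ℝ) ^ (-μ)) ≤
      C * γ₁ / (γ₁ * tailConstant μ) ^ ν * γ₁ *
        (exp (-(lam * γ₁ * tailConstant μ * (k : ℝ) ^ (1 - μ))) *
          (k : ℝ) ^ (-min μ (ν * (1 - μ)))) := by
  have hk0 : (0 : ℝ) < k := by exact_mod_cast hk
  have hd := tailConstant_pos hμ1
  set D := γ₁ * tailConstant μ * (k : ℝ) ^ (1 - μ) with hD
  have hD0 : 0 < D := by positivity
  have hsq : ∀ i : ℕ, (γ₁ * (i : ℝ) ^ (-μ)) ^ 2 = γ₁ ^ 2 * (i : ℝ) ^ (-(2 * μ)) := fun i => by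
    rw [mul_pow, ← rpow_mul_natCast (Nat.cast_nonneg _), Nat.cast_ofNat, mul_comm 2 μ, neg_mul]
  have hDν : D ^ ν = (γ₁ * tailConstant μ) ^ ν * (k : ℝ) ^ (ν * (1 - μ)) := by
    rw [hD, mul_rpow (by positivity) (by positivity), ← rpow_mul hk0.le, mul_comm (1 - μ)]
  calc ∑ i ∈ Icc 1 ((k - 1) / 2), (γ₁ * (i : ℝ) ^ (-μ)) ^ 2 *
        decayWeight lam ν (∑ j ∈ Icc (i + 1) k, γ₁ * (j : ℝ) ^ (-μ))
      ≤ ∑ i ∈ Icc 1 ((k - 1) / 2), (γ₁ * (i : ℝ) ^ (-μ)) ^ 2 * (exp (-(lam * D)) / D ^ ν) := by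
        refine sum_le_sum fun i hi => mul_le_mul_of_nonneg_left ?_ (by positivity)
        refine (decayWeight_le_of_le hlam hν hD0.le ?_).trans (decayWeight_le_exp_div_rpow hD0)
        rw [← mul_sum, hD, mul_assoc]
        exact mul_le_mul_of_nonneg_left (tailConstant_mul_rpow_le_sum_Icc hμ0 hμ1
          (by have := (mem_Icc.mp hi).2; omega)) hγ₁.le
    _ ≤ ∑ i ∈ Icc 1 k, (γ₁ * (i : ℝ) ^ (-μ)) ^ 2 * (exp (-(lam * D)) / D ^ ν) :=
        sum_le_sum_of_subset_of_nonneg (Icc_subset_Icc_right (by omega))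
          fun i _ _ => by positivity
    _ = γ₁ ^ 2 * (exp (-(lam * D)) / D ^ ν) * ∑ i ∈ Icc 1 k, (i : ℝ) ^ (-(2 * μ)) := by
        rw [mul_sum]
        exact sum_congr rfl fun i _ => by rw [hsq]; ring
    _ ≤ γ₁ ^ 2 * (exp (-(lam * D)) / D ^ ν) *
          (C * (k : ℝ) ^ (ν * (1 - μ) - min μ (ν * (1 - μ)))) := by gcongr
    _ = _ := by
        rw [hDν, rpow_sub hk0, rpow_neg hk0.le, hD, ← mul_assoc lam, ← mul_assoc lam]
        field_simp

theorem sum_Icc_tail_sq_mul_decayWeight_le (hlam : 0 ≤ lam) (hν : 1 < ν) (hγ₁ : 0 < γ₁)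
    (hμ0 : 0 ≤ μ) (hμ1 : μ ≤ 1) (hk : 1 ≤ k) :
    ∑ i ∈ Icc ((k - 1) / 2 + 1) k, (γ₁ * (i : ℝ) ^ (-μ)) ^ 2 *
        decayWeight lam ν (∑ j ∈ Icc (i + 1) k, γ₁ * (j : ℝ) ^ (-μ)) ≤
      (8 * γ₁ + 4 * (ν / (ν - 1))) * γ₁ * (k : ℝ) ^ (-μ) := by
  have hk0 : (0 : ℝ) < k := by exact_mod_cast hk
  set B := γ₁ * (k : ℝ) ^ (-μ) with hB
  have hB0 : 0 < B := by positivity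
  have hBγ : B ≤ γ₁ := mul_le_of_le_one_right hγ₁.le
    (rpow_le_one_of_one_le_of_nonpos (by exact_mod_cast hk) (by linarith))
  set h := (k - 1) / 2
  calc ∑ i ∈ Icc (h + 1) k, (γ₁ * (i : ℝ) ^ (-μ)) ^ 2 *
        decayWeight lam ν (∑ j ∈ Icc (i + 1) k, γ₁ * (j : ℝ) ^ (-μ))
      ≤ ∑ i ∈ Icc (h + 1) k, (2 * B) ^ 2 * (1 + (B * ((k - i : ℕ) : ℝ)) ^ ν)⁻¹ := by
        refine sum_le_sum fun i hi => ?_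
        obtain ⟨hhi, hik⟩ := mem_Icc.mp hi
        have hγi : γ₁ * (i : ℝ) ^ (-μ) ≤ 2 * B := by
          rw [hB, mul_left_comm]
          exact mul_le_mul_of_nonneg_left (rpow_neg_le_two_mul_rpow_neg hμ0 hμ1 hk0
            (by exact_mod_cast (by omega : k ≤ 2 * i))) hγ₁.le
        have hS : B * ((k - i : ℕ) : ℝ) ≤ ∑ j ∈ Icc (i + 1) k, γ₁ * (j : ℝ) ^ (-μ) := by
          rw [← mul_sum, hB, mul_assoc, mul_comm ((k : ℝ) ^ (-μ))]
          exact mul_le_mul_of_nonneg_left (natSub_mul_rpow_le_sum_Icc hμ0 i k) hγ₁.le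
        have hw := (decayWeight_le_of_le hlam (by linarith) (by positivity) hS).trans
          (decayWeight_le_inv (ν := ν) hlam (by positivity))
        exact (mul_le_mul_of_nonneg_left hw (by positivity)).trans
          (mul_le_mul_of_nonneg_right (pow_le_pow_left₀ (by positivity) hγi 2) (by positivity))
    _ = (2 * B) ^ 2 * ∑ m ∈ range (k - h), (1 + (B * m) ^ ν)⁻¹ := by
        rw [← mul_sum, ← Ico_add_one_right_eq_Icc,
          sum_Ico_reflect (fun m : ℕ => (1 + (B * m) ^ ν)⁻¹) _ (by omega)]
        simp
    _ ≤ (2 * B) ^ 2 * (2 + ν / (ν - 1) / B) := by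
        gcongr
        exact sum_range_inv_one_add_rpow_le hν hB0 _
    _ = (8 * B + 4 * (ν / (ν - 1))) * B := by
        field_simp
        ring
    _ ≤ (8 * γ₁ + 4 * (ν / (ν - 1))) * γ₁ * (k : ℝ) ^ (-μ) := by
        rw [mul_assoc _ γ₁]
        gcongr

end

theorem stmt19_general (ν γ₁ μ : ℝ) (hν : 1 < ν) (hγ₁0 : 0 < γ₁)
    (hμ0 : 0 < μ) (hμ1 : μ < 1) :
    ∃ C > (0 : ℝ), ∀ lam : ℝ, 0 < lam → ∀ k : ℕ, 1 ≤ k →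
      ∑ i ∈ Finset.Icc 1 k,
          (γ₁ * (i : ℝ) ^ (-μ)) ^ 2 *
            Real.exp (-(lam * ∑ j ∈ Finset.Icc (i + 1) k, γ₁ * (j : ℝ) ^ (-μ))) /
            (1 + (∑ j ∈ Finset.Icc (i + 1) k, γ₁ * (j : ℝ) ^ (-μ)) ^ ν) ≤
        C * γ₁ *
          (Real.exp (-(lam * γ₁ * ((1 - 2 ^ (μ - 1)) / (1 - μ)) * (k : ℝ) ^ (1 - μ))) *
              (k : ℝ) ^ (-min μ (ν * (1 - μ))) +
            (k : ℝ) ^ (-μ)) := by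
  obtain ⟨C₁, hC₁0, hC₁⟩ := exists_sum_Icc_rpow_neg_le (q := 2 * μ)
    (s := ν * (1 - μ) - min μ (ν * (1 - μ))) (by linarith [min_le_right μ (ν * (1 - μ))])
    (by nlinarith [min_le_left μ (ν * (1 - μ))])
  set K₁ := C₁ * γ₁ / (γ₁ * tailConstant μ) ^ ν
  set K₂ := 8 * γ₁ + 4 * (ν / (ν - 1))
  have hK₁ : 0 < K₁ := by have := tailConstant_pos hμ1; positivity
  have hK₂ : 0 < K₂ := by have := sub_pos.mpr hν; positivity
  refine ⟨K₁ + K₂, by positivity, fun lam hlam k hk => ?_⟩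
  set E := exp (-(lam * γ₁ * tailConstant μ * (k : ℝ) ^ (1 - μ))) *
    (k : ℝ) ^ (-min μ (ν * (1 - μ)))
  simp only [mul_div_assoc]
  change ∑ i ∈ Icc 1 k, _ * decayWeight lam ν _ ≤ (K₁ + K₂) * γ₁ * (E + _)
  rw [show Icc 1 k = Ioc 0 k from rfl,
    ← sum_Ioc_consecutive _ (Nat.zero_le ((k - 1) / 2)) (by omega),
    ← Icc_add_one_left_eq_Ioc, ← Icc_add_one_left_eq_Ioc, zero_add]
  have h₁ := sum_Icc_head_sq_mul_decayWeight_le hlam.le (by linarith) hγ₁0 hμ0 hμ1 hk (hC₁ k hk)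
  have h₂ := sum_Icc_tail_sq_mul_decayWeight_le hlam.le hν hγ₁0 hμ0.le hμ1.le hk
  have hcross : 0 ≤ K₁ * γ₁ * (k : ℝ) ^ (-μ) + K₂ * γ₁ * E := by positivity
  linear_combination h₁ + h₂ + hcross

/-- Let `ν > 1`, `γ₁ ∈ (0,1)`, `0 < μ < 1` and `γ_j = γ₁ j^{−μ}`.  Then
there is a constant `C > 0` (depending only on `μ, ν, γ₁` but not on `k` or `λ`) such that
for every `λ > 0` and every integer `k ≥ 1`,
`∑_{i=1}^k γ_i² exp(−λ ∑_{j=i+1}^k γ_j)/(1 + (∑_{j=i+1}^k γ_j)^ν)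
  ≤ C γ₁ (exp(−λ γ₁ d_μ k^{1−μ}) k^{−min(μ, ν(1−μ))} + k^{−μ})`,
where `d_μ = (1 − 2^{μ−1})/(1−μ)` and the inner sum is `0` when `i = k`. -/
theorem stmt19 (ν γ₁ μ : ℝ) (hν : 1 < ν) (hγ₁0 : 0 < γ₁) (hγ₁1 : γ₁ < 1)
    (hμ0 : 0 < μ) (hμ1 : μ < 1) :
    ∃ C > (0 : ℝ), ∀ lam : ℝ, 0 < lam → ∀ k : ℕ, 1 ≤ k →
      ∑ i ∈ Finset.Icc 1 k,
          (γ₁ * (i : ℝ) ^ (-μ)) ^ 2 *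
            Real.exp (-(lam * ∑ j ∈ Finset.Icc (i + 1) k, γ₁ * (j : ℝ) ^ (-μ))) /
            (1 + (∑ j ∈ Finset.Icc (i + 1) k, γ₁ * (j : ℝ) ^ (-μ)) ^ ν) ≤
        C * γ₁ *
          (Real.exp (-(lam * γ₁ * ((1 - 2 ^ (μ - 1)) / (1 - μ)) * (k : ℝ) ^ (1 - μ))) *
              (k : ℝ) ^ (-min μ (ν * (1 - μ))) +
            (k : ℝ) ^ (-μ)) :=
  stmt19_general ν γ₁ μ hν hγ₁0 hμ0 hμ1
end
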